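/- Let G be a compact metrizable topological group, H a closed subgroup not contained in any other proper closed subgroup of G, X = G/H, \phi: X \to G a measurable section of the quotient map. Let (x_m) be uniformly distributed in X (w.r.t. the G-invariant probability measure) and (h_m) uniformly distributed in H (w.r.t. Haar measure on H). Let (u_m) = ((x_{i(m)}, h_{j(m)})) be the convolution of the two sequences (so that every pair (x_i, h_j) occurs in the sequence). Then the sequence (\phi(x_{i(m)}) h_{j(m)}) in G is not contained in any proper closed subgroup of G. -/

import Mathlib

/-!
Since every pair of indices occurs, fixing the first index shows that `φ (x 0) * h b ∈ F` for all
`b`; as `(h b)` is dense in `H` and `F` is closed, `φ (x 0) * H ⊆ F`, whence `φ (x 0) ∈ F` and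
`H ≤ F`. If `F` were proper, maximality would give `F = H`, so every `φ (x a)` lies in `H`, i.e.
every `x a` is the trivial coset. But `(x a)` is dense in `G ⧸ H`, so `G ⧸ H` is a point and
`H = ⊤`, a contradiction.
-/

open MeasureTheory Filter Topology

/-- Uniform distribution via sampling averages of continuous functions. -/
def IsUniformlyDistributed {X : Type*} [TopologicalSpace X] [MeasurableSpace X]
    (μ : Measure X) (w : ℕ → X) : Prop :=
  ∀ f : C(X, ℝ),
    Tendsto (fun N : ℕ => (∑ m ∈ Finset.range N, f (w m)) / (N : ℝ)) atTop
      (𝓝 (∫ x, f x ∂μ))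

theorem IsUniformlyDistributed.denseRange {X : Type*} [TopologicalSpace X]
    [CompletelyRegularSpace X] [MeasurableSpace X] [OpensMeasurableSpace X]
    {μ : Measure X} [IsFiniteMeasure μ] [μ.IsOpenPosMeasure] {w : ℕ → X}
    (hw : IsUniformlyDistributed μ w) : DenseRange w := by
  intro y
  by_contra hy
  obtain ⟨f, hf, hfy, hf_one⟩ :=
    CompletelyRegularSpace.completely_regular y _ isClosed_closure hy
  let g : C(X, ℝ) := ⟨fun z => 1 - f z, continuous_const.sub (continuous_subtype_val.comp hf)⟩
  have hg_nonneg : 0 ≤ ⇑g := fun z => sub_nonneg.mpr (f z).2.2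
  have hg_seq : ∀ m, g (w m) = 0 := fun m => by
    simp [g, hf_one (subset_closure (Set.mem_range_self m))]
  have hg_int : Integrable g μ :=
    Integrable.of_bound g.continuous.aestronglyMeasurable 1 <| .of_forall fun z => by
      rw [Real.norm_of_nonneg (hg_nonneg z)]
      exact sub_le_self _ (f z).2.1
  have hg_integral : ∫ z, g z ∂μ = 0 := by
    refine tendsto_nhds_unique (hw g) ?_
    simp only [hg_seq, Finset.sum_const_zero, zero_div, tendsto_const_nhds]
  have hg_pos : 0 < ∫ z, g z ∂μ := by
    rw [integral_pos_iff_support_of_nonneg hg_nonneg hg_int]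
    exact g.continuous.isOpen_support.measure_pos μ ⟨y, by simp [g, hfy]⟩
  exact hg_pos.ne' hg_integral

theorem Subgroup.mul_mem_of_denseRange {G : Type*} [Group G] [TopologicalSpace G]
    [ContinuousMul G] {H F : Subgroup G} (hF : IsClosed (F : Set G)) {g : G} {h : ℕ → H}
    (hh : DenseRange h) (hmem : ∀ b, g * h b ∈ F) {y : G} (hy : y ∈ H) : g * y ∈ F :=
  hh.induction_on (p := fun z : H => g * z ∈ F) ⟨y, hy⟩
    (hF.preimage (continuous_const.mul continuous_subtype_val)) hmem

theorem QuotientGroup.eq_top_of_denseRange_of_forall_eq_mk_one {G : Type*} [Group G]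
    [TopologicalSpace G] [SeparatelyContinuousMul G] {H : Subgroup G} [IsClosed (H : Set G)]
    {x : ℕ → G ⧸ H}
    (hx : DenseRange x) (hx_one : ∀ a, x a = ((1 : G) : G ⧸ H)) : H = ⊤ := by
  have hrange : Set.range x ⊆ {((1 : G) : G ⧸ H)} := Set.range_subset_iff.mpr hx_one
  refine (Subgroup.eq_top_iff' H).mpr fun g => ?_
  have hg := closure_minimal hrange isClosed_singleton (hx (g : G ⧸ H))
  simpa using H.inv_mem (QuotientGroup.eq.mp hg)

theorem convolution_sequence_not_in_proper_closed_subgroup_general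
    {G : Type*} [Group G] [TopologicalSpace G] [IsTopologicalGroup G] [CompactSpace G]
    [MeasurableSpace G] [BorelSpace G]
    (μ : Measure G) [μ.IsHaarMeasure]
    (H : Subgroup G) (hHcl : IsClosed (H : Set G)) (hHproper : H ≠ ⊤)
    -- H is not contained in any other proper closed subgroup of G
    (hHmax : ∀ F : Subgroup G, IsClosed (F : Set G) → F ≠ ⊤ → H ≤ F → F = H)
    [MeasurableSpace (G ⧸ H)] [BorelSpace (G ⧸ H)]
    (ρH : Measure H) [ρH.IsHaarMeasure] [IsProbabilityMeasure ρH]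
    (φ : G ⧸ H → G)
    (hφ : ∀ q : G ⧸ H, (QuotientGroup.mk (φ q) : G ⧸ H) = q)
    (x : ℕ → G ⧸ H)
    (hx : IsUniformlyDistributed (μ.map (QuotientGroup.mk : G → G ⧸ H)) x)
    (h : ℕ → H) (hh : IsUniformlyDistributed ρH h)
    (i j : ℕ → ℕ)
    -- the convolution ordering: every pair of indices occurs
    (hconv : ∀ a b : ℕ, ∃ m : ℕ, i m = a ∧ j m = b)
    (F : Subgroup G) (hFcl : IsClosed (F : Set G))
    (hmem : ∀ m : ℕ, φ (x (i m)) * (h (j m) : G) ∈ F) :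
    F = ⊤ := by
  have hmem_pair : ∀ a b, φ (x a) * (h b : G) ∈ F := fun a b => by
    obtain ⟨m, rfl, rfl⟩ := hconv a b
    exact hmem m
  have hcoset : ∀ y ∈ H, φ (x 0) * y ∈ F := fun y =>
    Subgroup.mul_mem_of_denseRange hFcl hh.denseRange (hmem_pair 0)
  have hφ0 : φ (x 0) ∈ F := by simpa using hcoset 1 H.one_mem
  have hHF : H ≤ F := fun y hy => by
    simpa using F.mul_mem (F.inv_mem hφ0) (hcoset y hy)
  by_contra hF
  have hFH : F = H := hHmax F hFcl hF hHF
  have hx_one : ∀ a, x a = ((1 : G) : G ⧸ H) := fun a => by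
    have hφa : φ (x a) ∈ H := (H.mul_mem_cancel_right (h 0).2).mp (hFH ▸ hmem_pair a 0)
    rw [← hφ (x a)]
    exact QuotientGroup.eq.mpr (by simpa using H.inv_mem hφa)
  have : (μ.map (QuotientGroup.mk : G → G ⧸ H)).IsOpenPosMeasure :=
    QuotientGroup.continuous_mk.isOpenPosMeasure_map QuotientGroup.mk_surjective
  exact hHproper (QuotientGroup.eq_top_of_denseRange_of_forall_eq_mk_one hx.denseRange hx_one)

theorem convolution_sequence_not_in_proper_closed_subgroup
    {G : Type*} [Group G] [TopologicalSpace G] [IsTopologicalGroup G] [CompactSpace G]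
    [TopologicalSpace.MetrizableSpace G] [MeasurableSpace G] [BorelSpace G]
    (μ : Measure G) [μ.IsHaarMeasure] [IsProbabilityMeasure μ]
    (H : Subgroup G) (hHcl : IsClosed (H : Set G)) (hHproper : H ≠ ⊤)
    -- H is not contained in any other proper closed subgroup of G
    (hHmax : ∀ F : Subgroup G, IsClosed (F : Set G) → F ≠ ⊤ → H ≤ F → F = H)
    [MeasurableSpace (G ⧸ H)] [BorelSpace (G ⧸ H)]
    (ρH : Measure H) [ρH.IsHaarMeasure] [IsProbabilityMeasure ρH]
    (φ : G ⧸ H → G) (hφmeas : Measurable φ)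
    (hφ : ∀ q : G ⧸ H, (QuotientGroup.mk (φ q) : G ⧸ H) = q)
    (x : ℕ → G ⧸ H)
    (hx : IsUniformlyDistributed (μ.map (QuotientGroup.mk : G → G ⧸ H)) x)
    (h : ℕ → H) (hh : IsUniformlyDistributed ρH h)
    (i j : ℕ → ℕ)
    -- the convolution ordering: every pair of indices occurs
    (hconv : ∀ a b : ℕ, ∃ m : ℕ, i m = a ∧ j m = b)
    (F : Subgroup G) (hFcl : IsClosed (F : Set G))
    (hmem : ∀ m : ℕ, φ (x (i m)) * (h (j m) : G) ∈ F) :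
    F = ⊤ :=
  convolution_sequence_not_in_proper_closed_subgroup_general μ H hHcl hHproper hHmax ρH φ hφ x hx h
    hh i j hconv F hFcl hmem
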